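/- (First-column lemma) Let G be a δ-dense finite simple graph with nested solutions, with vertex set identified with {0,…,|V|−1} via an optimal order, and let A_1 ⊆ A_2 ⊆ ⋯ ⊆ A_{|V|²} be a chain of compressed subsets of V × V with |A_i| = i and I_{G²}(A_i) = I_{G²}(i) for every i. If A_2 = {(0,0), (0,1)}, then A_{|V|} = {(0,0), (0,1), …, (0, |V|−1)}. -/

import Mathlib

open Finset
open scoped Classical

/-- Number of edges of `G` with both endpoints in `A`. -/
noncomputable def edgesIn {V : Type*} [Fintype V] (G : SimpleGraph V) (A : Finset V) : ℕ :=
  (G.edgeFinset.filter (fun e => ∀ v ∈ e, v ∈ A)).card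

/-- `I_G(m)`: maximum number of induced edges over all `m`-subsets. -/
noncomputable def maxEdgesIn {V : Type*} [Fintype V] (G : SimpleGraph V) (m : ℕ) : ℕ :=
  (Finset.univ.powersetCard m).sup (edgesIn G)

/-- The `δ`-sequence of `G`. -/
noncomputable def deltaSeq {V : Type*} [Fintype V] (G : SimpleGraph V) (m : ℕ) : ℤ :=
  (maxEdgesIn G m : ℤ) - (maxEdgesIn G (m - 1) : ℤ)

/-- `G` has nested solutions. -/
def hasNS {V : Type*} [Fintype V] (G : SimpleGraph V) : Prop :=
  ∃ A : ℕ → Finset V,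
    (∀ i, 1 ≤ i → i < Fintype.card V → A i ⊆ A (i + 1)) ∧
    (∀ i, 1 ≤ i → i ≤ Fintype.card V →
      (A i).card = i ∧ edgesIn G (A i) = maxEdgesIn G i)

/-- `G` is `δ`-dense. -/
def deltaDense {V : Type*} [Fintype V] (G : SimpleGraph V) : Prop :=
  ∀ i, 2 ≤ i → i ≤ Fintype.card V → deltaSeq G i ≤ deltaSeq G (i - 1) → 2 ≤ deltaSeq G i

/-- The `d`-th cartesian power of `G`. -/
def cartPower {V : Type*} (G : SimpleGraph V) (d : ℕ) : SimpleGraph (Fin d → V) where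
  Adj x y := ∃ i, G.Adj (x i) (y i) ∧ ∀ j, j ≠ i → x j = y j
  symm := by
    constructor
    rintro x y ⟨i, h, hj⟩
    exact ⟨i, h.symm, fun j hje => (hj j hje).symm⟩
  loopless := by
    constructor
    rintro x ⟨i, h, -⟩
    exact G.loopless.irrefl _ h

/-- The initial segment `{0, …, k-1}` of `Fin N`. -/
def finSeg (N k : ℕ) : Finset (Fin N) :=
  Finset.univ.filter (fun v => (v : ℕ) < k)

/-- The set of the first `m` elements under a (strict total) order `r`. -/
noncomputable def initSeg {α : Type*} [Fintype α] (r : α → α → Prop) (m : ℕ) : Finset α :=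
  Finset.univ.filter (fun u => (Finset.univ.filter (fun w => r w u)).card < m)

/-- Strict lexicographic order on tuples. -/
def lexLt {n N : ℕ} (x y : Fin n → Fin N) : Prop :=
  ∃ i, (∀ j, j < i → x j = y j) ∧ x i < y i

/-- Strict colexicographic order on tuples. -/
def colexLt {n N : ℕ} (x y : Fin n → Fin N) : Prop :=
  ∃ i, (∀ j, i < j → x j = y j) ∧ x i < y i

/-- Strict lexicographic order on pairs. -/
def lexPair {N : ℕ} (p q : Fin N × Fin N) : Prop :=
  p.1 < q.1 ∨ (p.1 = q.1 ∧ p.2 < q.2)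

/-- Strict colexicographic order on pairs. -/
def colexPair {N : ℕ} (p q : Fin N × Fin N) : Prop :=
  p.2 < q.2 ∨ (p.2 = q.2 ∧ p.1 < q.1)

/-- A subset of `Fin M × Fin N` is compressed. -/
def IsCompressed {M N : ℕ} (A : Finset (Fin M × Fin N)) : Prop :=
  (∀ a : Fin M, ∀ y y' : Fin N, (a, y) ∈ A → y' ≤ y → (a, y') ∈ A) ∧
  (∀ b : Fin N, ∀ x x' : Fin M, (x, b) ∈ A → x' ≤ x → (x', b) ∈ A)

/-- Number of boundary edges: edges with exactly one endpoint in `A`. -/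
noncomputable def edgesBd {V : Type*} [Fintype V] (G : SimpleGraph V) (A : Finset V) : ℕ :=
  (G.edgeFinset.filter (fun e => ∃ u ∈ e, ∃ v ∈ e, u ∈ A ∧ v ∉ A)).card

/-! By induction on `i`, `A_i` is the segment `{0} × {0, …, i - 1}` of the first column for
`2 ≤ i ≤ N`. Were the vertex added to `A_n` outside the column, compression would force it to be
`(1, 0)`, whose only neighbour in the column is `(0, 0)`; then `A_{n+1}` would induce at most
`I_G(n) + 1` edges. The column segment of size `n + 1` induces `I_G(n + 1)` edges, and δ-density
gives `δ_G(n + 1) ≥ 2` once `n + 1 ≥ 3`, contradicting the optimality of `A_{n+1}`. -/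

section EdgeCounts

variable {V W : Type*} [Fintype V] [Fintype W]

lemma edgesIn_mono (G : SimpleGraph V) {A B : Finset V} (h : A ⊆ B) :
    edgesIn G A ≤ edgesIn G B :=
  Finset.card_le_card fun _ he => by
    rw [Finset.mem_filter] at he ⊢
    exact ⟨he.1, fun v hv => h (he.2 v hv)⟩

lemma edgesIn_le_maxEdgesIn (G : SimpleGraph V) (A : Finset V) :
    edgesIn G A ≤ maxEdgesIn G A.card :=
  Finset.le_sup (by simp)

lemma maxEdgesIn_le_succ (G : SimpleGraph V) {m : ℕ} (h : m < Fintype.card V) :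
    maxEdgesIn G m ≤ maxEdgesIn G (m + 1) := by
  refine Finset.sup_le fun A hA => ?_
  rw [Finset.mem_powersetCard_univ] at hA
  obtain ⟨B, hAB, -, hB⟩ := Finset.exists_subsuperset_card_eq (n := m + 1)
    (Finset.subset_univ A) (by omega) (by simpa using h)
  calc edgesIn G A ≤ edgesIn G B := edgesIn_mono G hAB
    _ ≤ maxEdgesIn G (m + 1) := hB ▸ edgesIn_le_maxEdgesIn G B

lemma edgesIn_map_embedding {H : SimpleGraph W} {K : SimpleGraph V} (f : H ↪g K)
    (S : Finset W) : edgesIn K (S.map f.toEmbedding) = edgesIn H S := by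
  rw [edgesIn, edgesIn, ← Finset.card_map ⟨Sym2.map f, Sym2.map.injective f.injective⟩]
  congr 1
  ext e
  simp only [Finset.mem_filter, Finset.mem_map, SimpleGraph.mem_edgeFinset,
    Function.Embedding.coeFn_mk, RelEmbedding.coe_toEmbedding]
  constructor
  · induction e using Sym2.ind with
    | _ u v =>
      simp only [Sym2.forall_mem_pair]
      rintro ⟨huv, ⟨x, hx, rfl⟩, ⟨y, hy, rfl⟩⟩
      exact ⟨s(x, y), ⟨f.map_adj_iff.mp huv, by simp [hx, hy]⟩, rfl⟩
  · rintro ⟨e', ⟨he', hmem⟩, rfl⟩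
    induction e' using Sym2.ind with
    | _ x y =>
      rw [Sym2.forall_mem_pair] at hmem
      simp only [Sym2.map_mk, SimpleGraph.mem_edgeSet, f.map_adj_iff, Sym2.forall_mem_pair]
      exact ⟨he', ⟨x, hmem.1, rfl⟩, ⟨y, hmem.2, rfl⟩⟩

lemma edgesIn_insert_le [DecidableEq V] (G : SimpleGraph V) (v : V) (A : Finset V) :
    edgesIn G (insert v A) ≤ edgesIn G A + (A.filter (G.Adj v)).card := by
  refine (Finset.card_le_card fun e he => ?_).trans <|
    (Finset.card_union_le _ _).trans
      (Nat.add_le_add_left (Finset.card_image_le (f := fun w => s(v, w))) _)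
  rw [Finset.mem_union, Finset.mem_image]
  simp only [Finset.mem_filter] at he ⊢
  obtain ⟨he, hmem⟩ := he
  induction e using Sym2.ind with
  | _ x y =>
    have hxy : G.Adj x y := SimpleGraph.mem_edgeFinset.mp he
    simp only [Sym2.forall_mem_pair, Finset.mem_insert] at hmem ⊢
    rcases hmem with ⟨hx | hx, hy | hy⟩
    · subst hx hy
      exact absurd hxy (G.loopless.irrefl _)
    · exact Or.inr ⟨y, ⟨hy, hx ▸ hxy⟩, hx ▸ rfl⟩
    · exact Or.inr ⟨x, ⟨hx, hy ▸ hxy.symm⟩, hy ▸ Sym2.eq_swap⟩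
    · exact Or.inl ⟨he, hx, hy⟩

end EdgeCounts

lemma deltaSeq_nonneg {V : Type*} [Fintype V] (G : SimpleGraph V) {m : ℕ}
    (hm : m ≤ Fintype.card V) : 0 ≤ deltaSeq G m := by
  rcases m with _ | m
  · simp [deltaSeq]
  · simpa [deltaSeq] using maxEdgesIn_le_succ G (m := m) (by omega)

namespace deltaDense

variable {V : Type*} [Fintype V] {G : SimpleGraph V}

lemma one_le_deltaSeq (hG : deltaDense G) {m : ℕ} (hm2 : 2 ≤ m) (hm : m ≤ Fintype.card V) :
    1 ≤ deltaSeq G m := by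
  by_contra! hlt
  have hle := deltaSeq_nonneg G (m := m - 1) (by omega)
  have := hG m hm2 hm (by omega)
  omega

lemma two_le_deltaSeq (hG : deltaDense G) {m : ℕ} (hm3 : 3 ≤ m) (hm : m ≤ Fintype.card V) :
    2 ≤ deltaSeq G m := by
  by_contra! hlt
  have hle := hG.one_le_deltaSeq (m := m - 1) (by omega) (by omega)
  have := hG m (by omega) hm (by omega)
  omega

end deltaDense

section FirstColumn

variable {M N : ℕ}

/-- `{(0, 0), …, (0, k - 1)}`, described through values so that no `0 : Fin M` is needed. -/
def firstColumn (M N k : ℕ) : Finset (Fin M × Fin N) :=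
  Finset.univ.filter fun p => (p.1 : ℕ) = 0 ∧ (p.2 : ℕ) < k

lemma mem_firstColumn {k : ℕ} {p : Fin M × Fin N} :
    p ∈ firstColumn M N k ↔ (p.1 : ℕ) = 0 ∧ (p.2 : ℕ) < k := by
  simp [firstColumn]

lemma firstColumn_eq_map (hM : 0 < M) (k : ℕ) :
    firstColumn M N k = (finSeg N k).map (Function.Embedding.sectR ⟨0, hM⟩ (Fin N)) := by
  ext ⟨a, b⟩
  simp only [mem_firstColumn, finSeg, Finset.mem_map, Finset.mem_filter, Finset.mem_univ,
    true_and, Function.Embedding.sectR_apply, Prod.mk.injEq]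
  exact ⟨fun h => ⟨b, h.2, Fin.ext h.1.symm, rfl⟩, by rintro ⟨_, h, rfl, rfl⟩; exact ⟨rfl, h⟩⟩

lemma card_firstColumn (hM : 0 < M) {k : ℕ} (hk : k ≤ N) : (firstColumn M N k).card = k := by
  rw [firstColumn_eq_map hM, Finset.card_map, finSeg, Fin.card_filter_val_lt]
  omega

lemma edgesIn_boxProd_firstColumn (hM : 0 < M) (G : SimpleGraph (Fin M))
    (H : SimpleGraph (Fin N)) (k : ℕ) :
    edgesIn (G □ H) (firstColumn M N k) = edgesIn H (finSeg N k) := by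
  rw [firstColumn_eq_map hM]
  exact edgesIn_map_embedding (G.boxProdRight H ⟨0, hM⟩) _

lemma firstColumn_succ {k : ℕ} (c : Fin M × Fin N) (hc1 : (c.1 : ℕ) = 0) (hc2 : (c.2 : ℕ) = k) :
    insert c (firstColumn M N k) = firstColumn M N (k + 1) := by
  ext p
  simp only [Finset.mem_insert, mem_firstColumn, Prod.ext_iff, Fin.ext_iff]
  omega

lemma edgesIn_insert_firstColumn_le (G : SimpleGraph (Fin M)) (H : SimpleGraph (Fin N))
    {c : Fin M × Fin N} (hc1 : (c.1 : ℕ) ≠ 0) (hc2 : (c.2 : ℕ) = 0) (k : ℕ) :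
    edgesIn (G □ H) (insert c (firstColumn M N k)) ≤ edgesIn (G □ H) (firstColumn M N k) + 1 := by
  have hnbr : ∀ w ∈ (firstColumn M N k).filter ((G □ H).Adj c),
      (w.1 : ℕ) = 0 ∧ (w.2 : ℕ) = 0 := by
    intro w hw
    rw [Finset.mem_filter, mem_firstColumn, SimpleGraph.boxProd_adj] at hw
    obtain ⟨⟨hw1, -⟩, ⟨-, hw2⟩ | ⟨-, hw2⟩⟩ := hw
    · exact ⟨hw1, hw2 ▸ hc2⟩
    · exact absurd (hw2 ▸ hw1) hc1
  have hone : ((firstColumn M N k).filter ((G □ H).Adj c)).card ≤ 1 :=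
    Finset.card_le_one.mpr fun w hw w' hw' => by
      obtain ⟨h1, h2⟩ := hnbr w hw
      obtain ⟨h1', h2'⟩ := hnbr w' hw'
      exact Prod.ext (Fin.ext (h1.trans h1'.symm)) (Fin.ext (h2.trans h2'.symm))
  have := edgesIn_insert_le (G □ H) c (firstColumn M N k)
  omega

/-- Off the column, `c = (a, b)` drags `(1, b)` and then `(1, 0)` into the compressed set; both
are new, so both equal `c`. -/
lemma IsCompressed.eq_of_insert_firstColumn {k : ℕ} {c : Fin M × Fin N}
    (hB : IsCompressed (insert c (firstColumn M N k))) (hc : c ∉ firstColumn M N k) :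
    ((c.1 : ℕ) = 0 ∧ (c.2 : ℕ) = k) ∨ ((c.1 : ℕ) = 1 ∧ (c.2 : ℕ) = 0) := by
  have hnew : ∀ p ∈ insert c (firstColumn M N k), p ∉ firstColumn M N k → p = c := fun p hp hp' =>
    (Finset.mem_insert.mp hp).resolve_right hp'
  have hcB := Finset.mem_insert_self c (firstColumn M N k)
  obtain ⟨a, b⟩ := c
  rw [mem_firstColumn, not_and, not_lt] at hc
  by_cases ha : (a : ℕ) = 0
  · have hk : k < N := (hc ha).trans_lt b.isLt
    have hak := hnew (a, ⟨k, hk⟩) (hB.1 a b _ hcB (Fin.le_def.mpr (hc ha)))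
      (by simp [mem_firstColumn])
    simp only [Prod.mk.injEq, Fin.ext_iff] at hak
    exact Or.inl ⟨ha, hak.2.symm⟩
  · have h1 : 1 < M := by omega
    have hb := hB.2 b a ⟨1, h1⟩ hcB (Fin.le_def.mpr (by simp only; omega))
    have h1b := hnew _ hb (by simp [mem_firstColumn])
    have h10 := hnew _ (hB.1 ⟨1, h1⟩ b ⟨0, b.pos⟩ hb (Fin.le_def.mpr (Nat.zero_le _)))
      (by simp [mem_firstColumn])
    simp only [Prod.mk.injEq, Fin.ext_iff] at h1b h10
    exact Or.inr ⟨h1b.1.symm, h10.2.symm⟩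

lemma edgesIn_insert_firstColumn_lt_maxEdgesIn (hM : 0 < M) (G : SimpleGraph (Fin M))
    {H : SimpleGraph (Fin N)} (hdense : deltaDense H)
    (hopt : ∀ k, k ≤ N → edgesIn H (finSeg N k) = maxEdgesIn H k)
    {c : Fin M × Fin N} (hc1 : (c.1 : ℕ) ≠ 0) (hc2 : (c.2 : ℕ) = 0) {n : ℕ} (hn2 : 2 ≤ n)
    (hnN : n < N) :
    edgesIn (G □ H) (insert c (firstColumn M N n)) < maxEdgesIn (G □ H) (n + 1) := by
  have hinsert := edgesIn_insert_firstColumn_le G H hc1 hc2 n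
  rw [edgesIn_boxProd_firstColumn hM, hopt n hnN.le] at hinsert
  have hcolumn : maxEdgesIn H (n + 1) ≤ maxEdgesIn (G □ H) (n + 1) := calc
    maxEdgesIn H (n + 1) = edgesIn (G □ H) (firstColumn M N (n + 1)) := by
      rw [edgesIn_boxProd_firstColumn hM, hopt (n + 1) hnN]
    _ ≤ maxEdgesIn (G □ H) (firstColumn M N (n + 1)).card := edgesIn_le_maxEdgesIn _ _
    _ = maxEdgesIn (G □ H) (n + 1) := by rw [card_firstColumn hM hnN]
  have hgain := hdense.two_le_deltaSeq (m := n + 1) (by omega) (by simpa using hnN)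
  simp only [deltaSeq, Nat.add_sub_cancel] at hgain
  omega

end FirstColumn

/-- First-column lemma.  `G` is a `δ`-dense graph on
`{0, …, N-1}` whose identification is an optimal order, and
`A_1 ⊆ ⋯ ⊆ A_{N²}` is a chain of compressed subsets of `V × V` with
`|A_i| = i` and `I_{G²}(A_i) = I_{G²}(i)`.  If `A_2 = {(0,0), (0,1)}`, then
`A_N = {(0,0), (0,1), …, (0, N-1)}`. -/
theorem stmt_9 {N : ℕ} (hN : 2 ≤ N) (G : SimpleGraph (Fin N))
    (hdense : deltaDense G)
    (hopt : ∀ k, k ≤ N → edgesIn G (finSeg N k) = maxEdgesIn G k)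
    (A : ℕ → Finset (Fin N × Fin N))
    (hchain : ∀ i, 1 ≤ i → i < N * N → A i ⊆ A (i + 1))
    (hcompr : ∀ i, 1 ≤ i → i ≤ N * N → IsCompressed (A i))
    (hcard : ∀ i, 1 ≤ i → i ≤ N * N → (A i).card = i)
    (hopt2 : ∀ i, 1 ≤ i → i ≤ N * N →
      edgesIn (G.boxProd G) (A i) = maxEdgesIn (G.boxProd G) i)
    (hA2 : A 2 = {((⟨0, by omega⟩ : Fin N), (⟨0, by omega⟩ : Fin N)),
                  ((⟨0, by omega⟩ : Fin N), (⟨1, by omega⟩ : Fin N))}) :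
    A N = Finset.univ.filter (fun p : Fin N × Fin N => (p.1 : ℕ) = 0) := by
  have hNN : N ≤ N * N := Nat.le_mul_of_pos_left N (by omega)
  suffices hcolumn : ∀ i, 2 ≤ i → i ≤ N → A i = firstColumn N N i by
    rw [hcolumn N hN le_rfl]
    ext p
    simp [mem_firstColumn]
  intro i hi2 hiN
  induction i, hi2 using Nat.le_induction with
  | base =>
    rw [hA2]
    ext p
    simp only [Finset.mem_insert, Finset.mem_singleton, mem_firstColumn, Prod.ext_iff, Fin.ext_iff]
    omega
  | succ n hn2 ih =>
    obtain ⟨c, hc, hinsert⟩ := Finset.exists_eq_insert_iff.mpr ⟨hchain n (by omega) (by omega),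
      by rw [hcard n (by omega) (by omega), hcard (n + 1) (by omega) (by omega)]⟩
    rw [ih (by omega)] at hc hinsert
    have hcompr' := hcompr (n + 1) (by omega) (by omega)
    rw [← hinsert] at hcompr' ⊢
    rcases hcompr'.eq_of_insert_firstColumn hc with ⟨hc1, hc2⟩ | ⟨hc1, hc2⟩
    · exact firstColumn_succ c hc1 hc2
    · have hlt := edgesIn_insert_firstColumn_lt_maxEdgesIn (by omega) G hdense hopt
        (by omega : (c.1 : ℕ) ≠ 0) hc2 hn2 hiN
      rw [hinsert, hopt2 (n + 1) (by omega) (by omega)] at hlt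
      exact absurd hlt (lt_irrefl _)
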